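/- Splitting Theorem: let R be a finite ranked poset with edges colored by I, let J ⊆ I, and let ν = Σ_{j∈J} ν_j ω_j^J be a dominant weight of Φ_J. Suppose WGF(R)|_J is W_J-invariant. Suppose 𝒮 ⊆ R is such that ν + wt^J(s) is Φ_J-dominant for every s ∈ 𝒮. Suppose further there are a bijection τ : R∖𝒮 → R∖𝒮 and a function κ : R∖𝒮 → J such that wt^J(τ(x)) = wt^J(x) − (1 + ν_{κ(x)} + m_{κ(x)}(x))·α_{κ(x)} for all x ∈ R∖𝒮. Then in ℤ[Λ_{Φ_J}]: χ^{Φ_J}_ν · WGF(R)|_J = Σ_{s∈𝒮} χ^{Φ_J}_{ν + wt^J(s)}. -/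

import Mathlib

open scoped BigOperators RealInnerProductSpace

noncomputable section

/-- The coroot `β∨ = (2/⟨β,β⟩) β` of a vector `β`. -/
def coroot {E : Type*} [NormedAddCommGroup E] [InnerProductSpace ℝ E] (β : E) : E :=
  (2 / ⟪β, β⟫) • β

/-- The reflection `v ↦ v - ⟨v, β∨⟩ β` determined by `β`, as a plain function. -/
def rootReflection {E : Type*} [NormedAddCommGroup E] [InnerProductSpace ℝ E] (β v : E) : E :=
  v - ⟪v, coroot β⟫ • β

/-- The determinant (sign) of a linear automorphism, as an integer (`±1` on the Weyl group). -/
def sgnDet {E : Type*} [NormedAddCommGroup E] [InnerProductSpace ℝ E] (w : E ≃ₗ[ℝ] E) : ℤ :=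
  if LinearMap.det (w : E →ₗ[ℝ] E) = 1 then 1 else -1

/-- A finite crystallographic root system `Φ` spanning the real inner-product space `E`,
with a fixed base of simple roots `{αᵢ}_{i ∈ I}` (a basis of `E`), together with the
corresponding fundamental weights `{ωᵢ}` (the basis dual to the simple coroots). -/
structure RootSystemBase (E : Type*) [NormedAddCommGroup E] [InnerProductSpace ℝ E]
    (I : Type*) [Fintype I] [DecidableEq I] where
  Φ : Set E
  finite : Φ.Finite
  zero_not_mem : (0 : E) ∉ Φ
  neg_mem : ∀ β ∈ Φ, -β ∈ Φ
  αBasis : Module.Basis I ℝ E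
  simple_mem : ∀ i, αBasis i ∈ Φ
  reflect_mem : ∀ β ∈ Φ, ∀ γ ∈ Φ, rootReflection β γ ∈ Φ
  crystallographic : ∀ β ∈ Φ, ∀ γ ∈ Φ, ∃ k : ℤ, ⟪γ, coroot β⟫ = (k : ℝ)
  reduced : ∀ β ∈ Φ, ∀ t : ℝ, t • β ∈ Φ → t = 1 ∨ t = -1
  base_int : ∀ β ∈ Φ, ∀ i, ∃ k : ℤ, αBasis.repr β i = (k : ℝ)
  base_signs : ∀ β ∈ Φ, (∀ i, 0 ≤ αBasis.repr β i) ∨ (∀ i, αBasis.repr β i ≤ 0)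
  ω : I → E
  ω_dual : ∀ i j, ⟪ω i, coroot (αBasis j)⟫ = if i = j then (1 : ℝ) else 0

namespace RootSystemBase

variable {E : Type*} [NormedAddCommGroup E] [InnerProductSpace ℝ E]
  {I : Type*} [Fintype I] [DecidableEq I]

variable (S : RootSystemBase E I)

/-- The simple roots. -/
def α (i : I) : E := S.αBasis i

/-- The set `Φ⁺` of positive roots. -/
def pos : Set E := {β | β ∈ S.Φ ∧ ∀ i, 0 ≤ S.αBasis.repr β i}

/-- The set `Φ⁻` of negative roots. -/
def neg : Set E := {β | β ∈ S.Φ ∧ ∀ i, S.αBasis.repr β i ≤ 0}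

/-- The Weyl group `W`: the subgroup of the linear automorphism group of `E`
generated by the simple reflections. -/
def W : Subgroup (E ≃ₗ[ℝ] E) :=
  Subgroup.closure {w : E ≃ₗ[ℝ] E | ∃ i, ∀ v, w v = rootReflection (S.α i) v}

/-- `μ` lies in the weight lattice `Λ` (the ℤ-span of the fundamental weights). -/
def IsWeight (μ : E) : Prop := ∃ c : I → ℤ, μ = ∑ i, (c i : ℝ) • S.ω i

/-- `μ` is a dominant weight (a nonnegative-integer combination of the `ωᵢ`). -/
def IsDominant (μ : E) : Prop := ∃ c : I → ℕ, μ = ∑ i, (c i : ℝ) • S.ω i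

/-- `μ` is a strongly dominant weight. -/
def IsStronglyDominant (μ : E) : Prop :=
  ∃ c : I → ℤ, (∀ i, 0 < c i) ∧ μ = ∑ i, (c i : ℝ) • S.ω i

/-- The partial order on `Λ`: `μ ≤ ν` iff `ν - μ` is a nonnegative-integer combination
of simple roots. -/
def wle (μ ν : E) : Prop := ∃ k : I → ℕ, ν - μ = ∑ i, (k i : ℝ) • S.α i

/-- `ϱ`, the sum of the fundamental weights. -/
def rho : E := ∑ i, S.ω i

/-- `ϱ∨ = Σᵢ (2/⟨αᵢ,αᵢ⟩) ωᵢ`. -/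
def rhoCheck : E := ∑ i, (2 / ⟪S.α i, S.α i⟫) • S.ω i

/-- The weight diagram `Π(λ)` of a dominant weight. -/
def PiWt (lam : E) : Set E :=
  {μ | S.IsWeight μ ∧
    ∃ w : E ≃ₗ[ℝ] E, w ∈ S.W ∧ ∃ ν : E, S.IsDominant ν ∧ S.wle ν lam ∧ μ = w ν}

/-- A saturated set of weights. -/
def Saturated (A : Set E) : Prop :=
  ∀ ν ∈ A, ∀ β ∈ S.Φ, ∀ k : ℤ,
    (((0 : ℝ) ≤ (k : ℝ) ∧ (k : ℝ) ≤ ⟪ν, coroot β⟫) ∨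
      (⟪ν, coroot β⟫ ≤ (k : ℝ) ∧ (k : ℝ) ≤ 0)) →
    ν - (k : ℝ) • β ∈ A

/-- The `W`-orbit of `lam`. -/
def orbit (lam : E) : Set E := {μ | ∃ w : E ≃ₗ[ℝ] E, w ∈ S.W ∧ μ = w lam}

end RootSystemBase

/-- `e^μ`, a basis element of the group ring. -/
def expw {E : Type*} [AddCommGroup E] (μ : E) : AddMonoidAlgebra ℤ E :=
  AddMonoidAlgebra.single μ 1

/-- The coefficient of `e^μ` in `φ`. -/
def coeffOf {E : Type*} [AddCommGroup E] (φ : AddMonoidAlgebra ℤ E) (μ : E) : ℤ :=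
  φ.coeff μ

/-- The support of an element of the group ring. -/
def suppOf {E : Type*} [AddCommGroup E] (φ : AddMonoidAlgebra ℤ E) : Finset E :=
  φ.coeff.support

/-- The action `w ⬝ e^μ = e^{w(μ)}` of a linear automorphism on the group ring. -/
def actGR {E : Type*} [NormedAddCommGroup E] [InnerProductSpace ℝ E]
    (w : E ≃ₗ[ℝ] E) (φ : AddMonoidAlgebra ℤ E) : AddMonoidAlgebra ℤ E :=
  AddMonoidAlgebra.ofCoeff (Finsupp.mapDomain (⇑w) φ.coeff)

namespace RootSystemBase

variable {E : Type*} [NormedAddCommGroup E] [InnerProductSpace ℝ E]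
  {I : Type*} [Fintype I] [DecidableEq I]
variable (S : RootSystemBase E I)

/-- `φ` lies in the group ring `ℤ[Λ]`. -/
def InGroupRing (φ : AddMonoidAlgebra ℤ E) : Prop := ∀ μ ∈ suppOf φ, S.IsWeight μ

/-- `φ` is a Weyl alternant: `w ⬝ φ = det(w) φ` for all `w ∈ W`. -/
def IsAlternant (φ : AddMonoidAlgebra ℤ E) : Prop :=
  ∀ w : E ≃ₗ[ℝ] E, w ∈ S.W → actGR w φ = sgnDet w • φ

/-- `φ` is `W`-invariant. -/
def IsInvariant (φ : AddMonoidAlgebra ℤ E) : Prop :=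
  ∀ w : E ≃ₗ[ℝ] E, w ∈ S.W → actGR w φ = φ

/-- The alternation operator `𝒜(φ) = Σ_{w ∈ W} det(w) (w ⬝ φ)`. -/
def Alt (φ : AddMonoidAlgebra ℤ E) : AddMonoidAlgebra ℤ E :=
  ∑ᶠ w : S.W, sgnDet (w : E ≃ₗ[ℝ] E) • actGR (w : E ≃ₗ[ℝ] E) φ

/-- `χ` is the Weyl bialternant attached to the dominant weight `lam`:  the unique
element of `ℤ[Λ]` with `𝒜(e^ϱ) ⬝ χ = 𝒜(e^{lam+ϱ})`. -/
def IsBialternant (lam : E) (χ : AddMonoidAlgebra ℤ E) : Prop :=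
  S.InGroupRing χ ∧ S.Alt (expw S.rho) * χ = S.Alt (expw (lam + S.rho))

end RootSystemBase

/-- A finite ranked poset with covering edges colored by `I`, identified with its
edge-colored Hasse diagram:  `edge i x y` means there is a covering edge `x →_i y`, and
`rank` is a rank function (each edge raises rank by one). -/
structure ColoredPoset (I : Type*) where
  V : Type
  [fintypeV : Fintype V]
  edge : I → V → V → Prop
  rank : V → ℤ
  rank_edge : ∀ i x y, edge i x y → rank y = rank x + 1

attribute [instance] ColoredPoset.fintypeV

namespace ColoredPoset

variable {I : Type*} (P : ColoredPoset I)

/-- One (undirected) step along an edge whose color lies in `J`. -/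
def stepIn (J : Set I) (x y : P.V) : Prop := ∃ i ∈ J, P.edge i x y ∨ P.edge i y x

/-- `x` and `y` lie in the same `J`-component. -/
def connIn (J : Set I) (x y : P.V) : Prop := Relation.ReflTransGen (P.stepIn J) x y

/-- The `i`-component `comp_i(x)` of `x`. -/
def comp (i : I) (x : P.V) : Set P.V := {y | P.connIn {i} x y}

/-- `ρ_i(x)`: the rank of `x` within its `i`-component. -/
def rhoi (i : I) (x : P.V) : ℕ := (P.rank x - sInf (P.rank '' P.comp i x)).toNat

/-- `l_i(x)`: the length of the `i`-component of `x`. -/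
def li (i : I) (x : P.V) : ℕ :=
  (sSup (P.rank '' P.comp i x) - sInf (P.rank '' P.comp i x)).toNat

/-- `δ_i(x) = l_i(x) - ρ_i(x)`: the depth of `x` within its `i`-component. -/
def deltai (i : I) (x : P.V) : ℕ := P.li i x - P.rhoi i x

/-- `m_i(x) = ρ_i(x) - δ_i(x) = 2ρ_i(x) - l_i(x)`. -/
def mi (i : I) (x : P.V) : ℤ := (P.rhoi i x : ℤ) - (P.deltai i x : ℤ)

/-- The partial order generated by the colored (covering) edges. -/
def ple (x y : P.V) : Prop := Relation.ReflTransGen (fun a b => ∃ i, P.edge i a b) x y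

/-- The poset is connected. -/
def Connected : Prop := ∀ x y : P.V, P.connIn Set.univ x y

/-- The poset is fibrous:  every `i`-component is a chain. -/
def Fibrous : Prop :=
  ∀ (i : I) (x y : P.V), P.connIn {i} x y →
    Relation.ReflTransGen (P.edge i) x y ∨ Relation.ReflTransGen (P.edge i) y x

end ColoredPoset

namespace RootSystemBase

variable {E : Type*} [NormedAddCommGroup E] [InnerProductSpace ℝ E]
  {I : Type*} [Fintype I] [DecidableEq I]
variable (S : RootSystemBase E I)

/-- The weight `wt(x) = Σᵢ m_i(x) ωᵢ` of an element of an edge-colored ranked poset. -/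
def wtv (P : ColoredPoset I) (x : P.V) : E := ∑ i, (P.mi i x : ℝ) • S.ω i

/-- `P` is `M_Φ`-structured:  `wt(s) + αᵢ = wt(t)` whenever `s →_i t`. -/
def MStruct (P : ColoredPoset I) : Prop :=
  ∀ (i : I) (x y : P.V), P.edge i x y → S.wtv P x + S.α i = S.wtv P y

/-- The weight generating function `WGF(P) = Σ_{x ∈ P} e^{wt(x)}`. -/
def WGF (P : ColoredPoset I) : AddMonoidAlgebra ℤ E := ∑ x : P.V, expw (S.wtv P x)

/-- `P` is a splitting poset for `χ`:  `P` is `M_Φ`-structured and `WGF(P) = χ`. -/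
def IsSplittingPoset (P : ColoredPoset I) (χ : AddMonoidAlgebra ℤ E) : Prop :=
  S.MStruct P ∧ S.WGF P = χ

end RootSystemBase

namespace RootSystemBase

variable {E : Type*} [NormedAddCommGroup E] [InnerProductSpace ℝ E] [FiniteDimensional ℝ E]
  {I : Type*} [Fintype I] [DecidableEq I]
variable (S : RootSystemBase E I)

/-- The subspace `𝔈_J` spanned by the simple roots `{α_j}_{j ∈ J}`. -/
def EJ (J : Finset I) : Submodule ℝ E := Submodule.span ℝ (S.α '' ↑J)

/-- The fundamental weight `ω_j^J` of `Φ_J`: the orthogonal projection of `ω_j` onto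
`𝔈_J`. -/
def omegaJ (J : Finset I) (j : I) : E := (Submodule.orthogonalProjectionOnto (S.EJ J) (S.ω j) : E)

/-- The parabolic subgroup `W_J`, generated by the simple reflections `{s_j}_{j ∈ J}`. -/
def WJ (J : Finset I) : Subgroup (E ≃ₗ[ℝ] E) :=
  Subgroup.closure {w : E ≃ₗ[ℝ] E | ∃ j ∈ J, ∀ v, w v = rootReflection (S.α j) v}

/-- The alternation operator `𝒜_J` over `W_J`. -/
def AltJ (J : Finset I) (φ : AddMonoidAlgebra ℤ E) : AddMonoidAlgebra ℤ E :=
  ∑ᶠ w : S.WJ J, sgnDet (w : E ≃ₗ[ℝ] E) • actGR (w : E ≃ₗ[ℝ] E) φ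

/-- `ϱ_J`, the sum of the fundamental weights of `Φ_J`. -/
def rhoJ (J : Finset I) : E := ∑ j ∈ J, S.omegaJ J j

/-- Membership in the weight lattice `Λ_{Φ_J}` of `Φ_J`. -/
def IsWeightJ (J : Finset I) (μ : E) : Prop := ∃ c : I → ℤ, μ = ∑ j ∈ J, (c j : ℝ) • S.omegaJ J j

/-- `μ` is a `Φ_J`-dominant weight. -/
def IsDominantJ (J : Finset I) (μ : E) : Prop := ∃ c : I → ℕ, μ = ∑ j ∈ J, (c j : ℝ) • S.omegaJ J j

/-- `χ` is the `Φ_J`-Weyl bialternant attached to the `Φ_J`-dominant weight `μ`. -/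
def IsBialternantJ (J : Finset I) (μ : E) (χ : AddMonoidAlgebra ℤ E) : Prop :=
  (∀ ν ∈ suppOf χ, S.IsWeightJ J ν) ∧
    S.AltJ J (expw (S.rhoJ J)) * χ = S.AltJ J (expw (μ + S.rhoJ J))

/-- The `J`-weight `wt^J(x) = Σ_{j ∈ J} m_j(x) ω_j^J` of an element of an edge-colored
ranked poset. -/
def wtJ (J : Finset I) (P : ColoredPoset I) (x : P.V) : E :=
  ∑ j ∈ J, (P.mi j x : ℝ) • S.omegaJ J j

/-- The restricted weight generating function `WGF(R)|_J = Σ_{x ∈ R} e^{wt^J(x)}`. -/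
def WGFJ (J : Finset I) (P : ColoredPoset I) : AddMonoidAlgebra ℤ E :=
  ∑ x : P.V, expw (S.wtJ J P x)

end RootSystemBase

/-!
Multiply both sides by `𝒜_J(e^{ϱ_J})`. Since `WGF(R)|_J` is `W_J`-invariant,
`𝒜_J(e^{ν+ϱ_J}) · WGF(R)|_J = Σ_x 𝒜_J(e^{ν+ϱ_J+wt^J(x)})`. For `x ∉ 𝒮` the condition on `τ` says
exactly that `ν+ϱ_J+wt^J(τ x)` is the image of `ν+ϱ_J+wt^J(x)` under the simple reflection
`s_{κ(x)}`, so the terms indexed by `R∖𝒮` change sign under the bijection `τ` and cancel, while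
those indexed by `𝒮` are `𝒜_J(e^{ϱ_J}) · χ_{ν+wt^J(s)}`. Finally `𝒜_J(e^{ϱ_J})` can be cancelled in
the domain `ℤ[𝔈]`: its coefficient at `e^{ϱ_J}` is `1`, because `ϱ_J` has trivial stabiliser in
`W_J` by the deletion argument on words in the simple reflections.
-/

section Reflection

variable {E : Type*} [NormedAddCommGroup E] [InnerProductSpace ℝ E]

/-- `rootReflection β` (see `sRefl_apply`), taken from Mathlib's reflection in the hyperplane `β⟂`
so that its isometry and determinant come from the library. -/
def sRefl (β : E) : E ≃ₗ[ℝ] E := (ℝ ∙ β)ᗮ.reflection.toLinearEquiv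

theorem sRefl_apply (β v : E) : sRefl β v = rootReflection β v := by
  change (ℝ ∙ β)ᗮ.reflection v = _
  rw [Submodule.reflection_orthogonal_apply, Submodule.reflection_singleton_apply, rootReflection,
    coroot, real_inner_smul_right, RCLike.ofReal_real_eq_id, id, ← real_inner_self_eq_norm_sq,
    real_inner_comm]
  module

@[simp]
theorem sRefl_mul_self (β : E) : sRefl β * sRefl β = 1 :=
  LinearEquiv.ext (ℝ ∙ β)ᗮ.reflection_reflection

theorem inner_sRefl_sRefl (β u v : E) : ⟪sRefl β u, sRefl β v⟫ = ⟪u, v⟫ :=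
  (ℝ ∙ β)ᗮ.reflection.inner_map_map u v

theorem sRefl_self (β : E) : sRefl β β = -β :=
  Submodule.reflection_orthogonalComplement_singleton_eq_neg β

theorem det_sRefl [FiniteDimensional ℝ E] {β : E} (hβ : β ≠ 0) :
    LinearMap.det (sRefl β : E →ₗ[ℝ] E) = -1 := by
  have := (ℝ ∙ β)ᗮ.det_reflection
  rw [Submodule.orthogonal_orthogonal, finrank_span_singleton hβ, pow_one] at this
  exact this

theorem sRefl_conj {w : E ≃ₗ[ℝ] E} (hw : ∀ u v, ⟪w u, w v⟫ = ⟪u, v⟫) (γ : E) :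
    sRefl (w γ) = w * sRefl γ * w⁻¹ := by
  refine LinearEquiv.ext fun v => ?_
  obtain ⟨u, rfl⟩ := w.surjective v
  have : w⁻¹ (w u) = u := w.symm_apply_apply u
  simp only [LinearEquiv.mul_apply, this, sRefl_apply, rootReflection, coroot, hw, map_sub,
    map_smul, real_inner_smul_right]

section WordProd

variable {ι : Type*} (a : ι → E)

def reflWordProd (L : List ι) : E ≃ₗ[ℝ] E := (L.map fun j => sRefl (a j)).prod

@[simp]
theorem reflWordProd_nil : reflWordProd a [] = 1 := rfl

@[simp]
theorem reflWordProd_cons (j : ι) (L : List ι) :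
    reflWordProd a (j :: L) = sRefl (a j) * reflWordProd a L := rfl

@[simp]
theorem reflWordProd_append (L M : List ι) :
    reflWordProd a (L ++ M) = reflWordProd a L * reflWordProd a M := by
  simp [reflWordProd]

theorem inner_reflWordProd (L : List ι) (u v : E) :
    ⟪reflWordProd a L u, reflWordProd a L v⟫ = ⟪u, v⟫ := by
  induction L with
  | nil => rfl
  | cons j L ih => exact (inner_sRefl_sRefl _ _ _).trans ih

theorem mapsTo_reflWordProd {A : Set E} (hA : ∀ j, Set.MapsTo (sRefl (a j)) A A) (L : List ι) :
    Set.MapsTo (reflWordProd a L) A A := by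
  induction L with
  | nil => exact Set.mapsTo_id A
  | cons j L ih => exact (hA j).comp ih

theorem det_reflWordProd [FiniteDimensional ℝ E] (ha : ∀ j, a j ≠ 0) (L : List ι) :
    LinearMap.det (reflWordProd a L : E →ₗ[ℝ] E) = (-1) ^ L.length := by
  induction L with
  | nil => exact LinearMap.det_id
  | cons j L ih =>
    rw [reflWordProd_cons, LinearEquiv.coe_toLinearMap_mul, map_mul, det_sRefl (ha j), ih,
      List.length_cons, pow_succ']

theorem sgnDet_reflWordProd [FiniteDimensional ℝ E] (ha : ∀ j, a j ≠ 0) (L : List ι) :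
    sgnDet (reflWordProd a L) = (-1) ^ L.length := by
  rw [sgnDet, det_reflWordProd a ha]
  rcases L.length.even_or_odd with h | h <;> norm_num [h.neg_one_pow]

theorem exists_eq_append_cons_of_reflWordProd_notMem {P : Set E} {γ : E} (hγ : γ ∈ P) :
    ∀ M : List ι, reflWordProd a M γ ∉ P → ∃ M₁ t M₂, M = M₁ ++ t :: M₂ ∧
      reflWordProd a M₂ γ ∈ P ∧ sRefl (a t) (reflWordProd a M₂ γ) ∉ P
  | [], h => absurd hγ h
  | t :: M, h => by
    by_cases hM : reflWordProd a M γ ∈ P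
    · exact ⟨[], t, M, rfl, hM, h⟩
    · obtain ⟨M₁, t', M₂, rfl, h₁, h₂⟩ := exists_eq_append_cons_of_reflWordProd_notMem hγ M hM
      exact ⟨t :: M₁, t', M₂, rfl, h₁, h₂⟩

/-- Deletion argument: if the word ends in `q`, some suffix `M₂` sends `a q` to `a t` by the
exchange hypothesis `hexch`, and then `s_t M₂ s_q = M₂` shortens the word. -/
theorem reflWordProd_eq_one_of_mapsTo {P : Set E} (ha : ∀ j, a j ∈ P) (hP : ∀ β ∈ P, -β ∉ P)
    (hexch : ∀ j, ∀ β ∈ P, β ≠ a j → sRefl (a j) β ∈ P) (L : List ι)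
    (hL : Set.MapsTo (reflWordProd a L) P P) : reflWordProd a L = 1 := by
  induction h : L.length using Nat.strong_induction_on generalizing L with
  | _ n ih =>
    obtain rfl | ⟨L, q, rfl⟩ := L.eq_nil_or_concat
    · rfl
    rw [List.concat_eq_append] at *
    have hsplit : reflWordProd a (L ++ [q]) = reflWordProd a L * sRefl (a q) := by simp
    have hnot : reflWordProd a L (a q) ∉ P := fun hmem => hP _ hmem <| by
      simpa [hsplit, sRefl_self] using hL (ha q)
    obtain ⟨M₁, t, M₂, rfl, hM₂, hM₂t⟩ :=
      exists_eq_append_cons_of_reflWordProd_notMem a (ha q) L hnot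
    have hM₂q : reflWordProd a M₂ (a q) = a t := by
      by_contra hne
      exact hM₂t (hexch t _ hM₂ hne)
    have hconj : sRefl (a t) = reflWordProd a M₂ * sRefl (a q) * (reflWordProd a M₂)⁻¹ := by
      rw [← hM₂q, sRefl_conj (inner_reflWordProd a M₂)]
    have hshort : reflWordProd a (M₁ ++ t :: M₂ ++ [q]) = reflWordProd a (M₁ ++ M₂) := by
      simp only [reflWordProd_append, reflWordProd_cons, reflWordProd_nil, hconj, mul_one]
      simp [mul_assoc]
    rw [hshort] at hL ⊢
    exact ih _ (by simp at h ⊢; omega) _ hL rfl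

end WordProd

end Reflection

section GroupRing

instance AddMonoidAlgebra.isAddTorsionFree {R M : Type*} [Semiring R] [IsAddTorsionFree R] :
    IsAddTorsionFree (AddMonoidAlgebra R M) :=
  Function.Injective.isAddTorsionFree
    (AddMonoidAlgebra.coeffAddEquiv (R := R) (M := M)).toAddMonoidHom
    AddMonoidAlgebra.coeffAddEquiv.injective

instance AddMonoidAlgebra.noZeroDivisors_int_of_module_real {E : Type*} [AddCommGroup E]
    [Module ℝ E] : NoZeroDivisors (AddMonoidAlgebra ℤ E) :=
  letI : Module ℚ E := Module.compHom E (algebraMap ℚ ℝ)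
  inferInstance

theorem Finset.sum_eq_zero_of_bijOn_of_eq_neg {α M : Type*} [AddCommGroup M] [IsAddTorsionFree M]
    {s : Finset α} {τ : α → α} (hτ : Set.BijOn τ s s) {f : α → M}
    (hf : ∀ x ∈ s, f (τ x) = -f x) : ∑ x ∈ s, f x = 0 := by
  rw [← self_eq_neg]
  calc ∑ x ∈ s, f x = ∑ x ∈ s, f (τ x) :=
        (Finset.sum_nbij τ hτ.mapsTo hτ.injOn hτ.surjOn fun _ _ => rfl).symm
    _ = -∑ x ∈ s, f x := by rw [← Finset.sum_neg_distrib]; exact Finset.sum_congr rfl hf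

variable {E : Type*} [NormedAddCommGroup E] [InnerProductSpace ℝ E]

theorem actGR_eq_mapDomainRingHom (w : E ≃ₗ[ℝ] E) :
    actGR w = AddMonoidAlgebra.mapDomainRingHom ℤ (w : E →ₗ[ℝ] E).toAddMonoidHom := rfl

theorem actGR_expw (w : E ≃ₗ[ℝ] E) (μ : E) : actGR w (expw μ) = expw (w μ) := by
  simp [actGR_eq_mapDomainRingHom, expw]

end GroupRing

namespace RootSystemBase

section PositiveRoots

variable {E : Type*} [NormedAddCommGroup E] [InnerProductSpace ℝ E]
  {I : Type*} [Fintype I] [DecidableEq I] (S : RootSystemBase E I)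

theorem α_ne_zero (i : I) : S.α i ≠ 0 := S.αBasis.ne_zero i

theorem repr_α (i j : I) : S.αBasis.repr (S.α i) j = if i = j then 1 else 0 := by
  simp [α, Finsupp.single_apply]

theorem α_mem_pos (i : I) : S.α i ∈ S.pos :=
  ⟨S.simple_mem i, fun j => by rw [repr_α]; split_ifs <;> norm_num⟩

theorem neg_notMem_pos {β : E} (hβ : β ∈ S.pos) : -β ∉ S.pos := fun h => S.zero_not_mem <| by
  have : S.αBasis.repr β = 0 :=
    Finsupp.ext fun i => le_antisymm (by simpa using h.2 i) (hβ.2 i)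
  simpa [S.αBasis.repr.map_eq_zero_iff.mp this] using hβ.1

theorem repr_rootReflection_α_of_ne (β : E) {q i : I} (hi : i ≠ q) :
    S.αBasis.repr (rootReflection (S.α q) β) i = S.αBasis.repr β i := by
  simp [rootReflection, S.repr_α, Ne.symm hi]

theorem sRefl_mem_pos {q : I} {β : E} (hβ : β ∈ S.pos) (hne : β ≠ S.α q) :
    sRefl (S.α q) β ∈ S.pos := by
  have hΦ : rootReflection (S.α q) β ∈ S.Φ := S.reflect_mem _ (S.simple_mem q) _ hβ.1
  obtain ⟨i, hiq, hi⟩ : ∃ i ≠ q, 0 < S.αBasis.repr β i := by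
    by_contra! h
    have hβq : β = S.αBasis.repr β q • S.α q := by
      refine S.αBasis.repr.injective (Finsupp.ext fun i => ?_)
      by_cases hiq : i = q
      · simp [hiq, S.repr_α]
      · simp [S.repr_α, Ne.symm hiq, le_antisymm (h i hiq) (hβ.2 i)]
    rcases S.reduced _ (S.simple_mem q) _ (hβq ▸ hβ.1) with h1 | h1
    · exact hne (by rw [hβq, h1, one_smul])
    · linarith [hβ.2 q]
  rw [sRefl_apply]
  refine ⟨hΦ, (S.base_signs _ hΦ).resolve_right fun h => ?_⟩
  linarith [h i, S.repr_rootReflection_α_of_ne β hiq]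

end PositiveRoots

section Parabolic

variable {E : Type*} [NormedAddCommGroup E] [InnerProductSpace ℝ E]
  {I : Type*} [Fintype I] [DecidableEq I] (S : RootSystemBase E I) (J : Finset I)

theorem α_mem_EJ {j : I} (hj : j ∈ J) : S.α j ∈ S.EJ J := Submodule.subset_span ⟨j, hj, rfl⟩

theorem mem_EJ_iff {β : E} : β ∈ S.EJ J ↔ ∀ i ∉ J, S.αBasis.repr β i = 0 := by
  rw [EJ, show S.α '' ↑J = S.αBasis '' ↑J from rfl, Module.Basis.mem_span_image]
  refine ⟨fun h i hi => by_contra fun h' => hi (h (Finsupp.mem_support_iff.mpr h')), ?_⟩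
  exact fun h i hi => by_contra fun h' => Finsupp.mem_support_iff.mp hi (h i h')

theorem sRefl_mem_WJ {j : I} (hj : j ∈ J) : sRefl (S.α j) ∈ S.WJ J :=
  Subgroup.subset_closure ⟨j, hj, sRefl_apply _⟩

theorem exists_eq_reflWordProd_of_mem_WJ {w : E ≃ₗ[ℝ] E} (hw : w ∈ S.WJ J) :
    ∃ L : List J, w = reflWordProd (fun j : J => S.α j) L := by
  have hgen : ∀ x ∈ {w : E ≃ₗ[ℝ] E | ∃ j ∈ J, ∀ v, w v = rootReflection (S.α j) v},
      ∃ j : J, x = sRefl (S.α j) := fun x ⟨j, hj, hx⟩ =>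
    ⟨⟨j, hj⟩, LinearEquiv.ext fun v => (hx v).trans (sRefl_apply _ _).symm⟩
  induction hw using Subgroup.closure_induction_left with
  | one => exact ⟨[], rfl⟩
  | mul_left x hx y _ ih =>
    obtain ⟨j, rfl⟩ := hgen x hx
    obtain ⟨L, rfl⟩ := ih
    exact ⟨j :: L, rfl⟩
  | inv_mul_cancel x hx y _ ih =>
    obtain ⟨j, rfl⟩ := hgen x hx
    obtain ⟨L, rfl⟩ := ih
    exact ⟨j :: L, by rw [inv_eq_of_mul_eq_one_right (sRefl_mul_self _)]; rfl⟩

theorem inner_map_map_of_mem_WJ {w : E ≃ₗ[ℝ] E} (hw : w ∈ S.WJ J) (u v : E) :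
    ⟪w u, w v⟫ = ⟪u, v⟫ := by
  obtain ⟨L, rfl⟩ := S.exists_eq_reflWordProd_of_mem_WJ J hw
  exact inner_reflWordProd _ L u v

theorem mapsTo_Φ_of_mem_WJ {w : E ≃ₗ[ℝ] E} (hw : w ∈ S.WJ J) : Set.MapsTo w S.Φ S.Φ := by
  obtain ⟨L, rfl⟩ := S.exists_eq_reflWordProd_of_mem_WJ J hw
  refine mapsTo_reflWordProd _ (fun j β hβ => ?_) L
  rw [sRefl_apply]
  exact S.reflect_mem _ (S.simple_mem j) _ hβ

theorem mapsTo_EJ_of_mem_WJ {w : E ≃ₗ[ℝ] E} (hw : w ∈ S.WJ J) :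
    Set.MapsTo w (S.EJ J) (S.EJ J) := by
  obtain ⟨L, rfl⟩ := S.exists_eq_reflWordProd_of_mem_WJ J hw
  refine mapsTo_reflWordProd _ (fun j β hβ => ?_) L
  rw [SetLike.mem_coe, sRefl_apply, rootReflection]
  exact sub_mem hβ (Submodule.smul_mem _ _ (S.α_mem_EJ J j.2))

instance finite_WJ : Finite (S.WJ J) := by
  have : Finite S.Φ := S.finite.to_subtype
  refine Finite.of_injective (fun w : S.WJ J => (S.mapsTo_Φ_of_mem_WJ J w.2).restrict)
    fun w₁ w₂ h => Subtype.ext <| LinearEquiv.toLinearMap_injective <| S.αBasis.ext fun i => ?_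
  exact congrArg Subtype.val (congrFun h ⟨S.α i, S.simple_mem i⟩)

theorem AltJ_eq_sum [Fintype (S.WJ J)] (φ : AddMonoidAlgebra ℤ E) :
    S.AltJ J φ = ∑ w : S.WJ J, sgnDet (w : E ≃ₗ[ℝ] E) • actGR w φ :=
  finsum_eq_sum_of_fintype _

theorem AltJ_sum {γ : Type*} (s : Finset γ) (f : γ → AddMonoidAlgebra ℤ E) :
    S.AltJ J (∑ x ∈ s, f x) = ∑ x ∈ s, S.AltJ J (f x) := by
  have := Fintype.ofFinite (S.WJ J)
  simp only [AltJ_eq_sum, actGR_eq_mapDomainRingHom, map_sum, Finset.smul_sum]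
  exact Finset.sum_comm

theorem AltJ_mul_of_invariant (φ ψ : AddMonoidAlgebra ℤ E)
    (hψ : ∀ w : E ≃ₗ[ℝ] E, w ∈ S.WJ J → actGR w ψ = ψ) :
    S.AltJ J (φ * ψ) = S.AltJ J φ * ψ := by
  have := Fintype.ofFinite (S.WJ J)
  simp only [AltJ_eq_sum, Finset.sum_mul, smul_mul_assoc]
  refine Finset.sum_congr rfl fun w _ => ?_
  rw [actGR_eq_mapDomainRingHom, map_mul, ← actGR_eq_mapDomainRingHom, hψ w w.2]

end Parabolic

section ParabolicWeights

variable {E : Type*} [NormedAddCommGroup E] [InnerProductSpace ℝ E] [FiniteDimensional ℝ E]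
  {I : Type*} [Fintype I] [DecidableEq I] (S : RootSystemBase E I) (J : Finset I)

theorem inner_omegaJ_coroot (j : I) {q : I} (hq : q ∈ J) :
    ⟪S.omegaJ J j, coroot (S.α q)⟫ = if j = q then 1 else 0 := by
  have hq' : coroot (S.α q) ∈ S.EJ J := Submodule.smul_mem _ _ (S.α_mem_EJ J hq)
  rw [omegaJ, ← S.ω_dual j q]
  exact Submodule.inner_orthogonalProjectionOnto_eq_of_mem_right ⟨_, hq'⟩ (S.ω j)

theorem inner_sum_omegaJ_coroot (c : I → ℝ) {q : I} (hq : q ∈ J) :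
    ⟪∑ j ∈ J, c j • S.omegaJ J j, coroot (S.α q)⟫ = c q := by
  simp [sum_inner, real_inner_smul_left, S.inner_omegaJ_coroot J _ hq, hq]

theorem inner_rhoJ_coroot {q : I} (hq : q ∈ J) : ⟪S.rhoJ J, coroot (S.α q)⟫ = 1 := by
  simpa [rhoJ] using S.inner_sum_omegaJ_coroot J (fun _ => 1) hq

theorem inner_rhoJ_α_pos {q : I} (hq : q ∈ J) : 0 < ⟪S.rhoJ J, S.α q⟫ := by
  have h := S.inner_rhoJ_coroot J hq
  rw [coroot, real_inner_smul_right] at h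
  have hα : 0 < ⟪S.α q, S.α q⟫ := real_inner_self_pos.mpr (S.α_ne_zero q)
  by_contra! h'
  nlinarith [div_pos two_pos hα]

theorem inner_rhoJ_eq_sum {β : E} (hβ : β ∈ S.EJ J) :
    ⟪S.rhoJ J, β⟫ = ∑ i ∈ J, S.αBasis.repr β i * ⟪S.rhoJ J, S.α i⟫ := by
  conv_lhs => rw [← S.αBasis.sum_repr β]
  rw [inner_sum, ← Finset.sum_subset J.subset_univ fun i _ hi => by
    rw [(S.mem_EJ_iff J).mp hβ i hi, zero_smul, inner_zero_right]]
  simp only [real_inner_smul_right, α]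

theorem inner_rhoJ_pos {β : E} (hβ : β ∈ S.pos) (hβJ : β ∈ S.EJ J) : 0 < ⟪S.rhoJ J, β⟫ := by
  obtain ⟨i, hi⟩ : ∃ i, S.αBasis.repr β i ≠ 0 := by
    by_contra! h
    exact S.zero_not_mem (by simpa [S.αBasis.repr.map_eq_zero_iff.mp (Finsupp.ext h)] using hβ.1)
  have hiJ : i ∈ J := by_contra fun h => hi ((S.mem_EJ_iff J).mp hβJ i h)
  rw [S.inner_rhoJ_eq_sum J hβJ]
  refine Finset.sum_pos' (fun j hj => mul_nonneg (hβ.2 j) (S.inner_rhoJ_α_pos J hj).le)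
    ⟨i, hiJ, mul_pos ((hβ.2 i).lt_of_ne' hi) (S.inner_rhoJ_α_pos J hiJ)⟩

theorem inner_rhoJ_nonpos {β : E} (hβ : β ∈ S.neg) (hβJ : β ∈ S.EJ J) : ⟪S.rhoJ J, β⟫ ≤ 0 := by
  rw [S.inner_rhoJ_eq_sum J hβJ]
  exact Finset.sum_nonpos fun j hj => mul_nonpos_of_nonpos_of_nonneg (hβ.2 j)
    (S.inner_rhoJ_α_pos J hj).le

theorem mapsTo_pos_inter_EJ {w : E ≃ₗ[ℝ] E} (hw : w ∈ S.WJ J) (hρ : w (S.rhoJ J) = S.rhoJ J) :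
    Set.MapsTo w (S.pos ∩ S.EJ J) (S.pos ∩ S.EJ J) := by
  rintro β ⟨hβ, hβJ⟩
  have hwΦ := S.mapsTo_Φ_of_mem_WJ J hw hβ.1
  have hwJ := S.mapsTo_EJ_of_mem_WJ J hw hβJ
  refine ⟨⟨hwΦ, (S.base_signs _ hwΦ).resolve_right fun hneg => ?_⟩, hwJ⟩
  have := S.inner_rhoJ_nonpos J ⟨hwΦ, hneg⟩ hwJ
  rw [← hρ, S.inner_map_map_of_mem_WJ J hw] at this
  exact this.not_gt (S.inner_rhoJ_pos J hβ hβJ)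

theorem eq_one_of_mem_WJ_of_apply_rhoJ {w : E ≃ₗ[ℝ] E} (hw : w ∈ S.WJ J)
    (hρ : w (S.rhoJ J) = S.rhoJ J) : w = 1 := by
  have hmaps := S.mapsTo_pos_inter_EJ J hw hρ
  obtain ⟨L, rfl⟩ := S.exists_eq_reflWordProd_of_mem_WJ J hw
  refine reflWordProd_eq_one_of_mapsTo (fun j : J => S.α j) (P := S.pos ∩ S.EJ J)
    (fun j => ⟨S.α_mem_pos j, S.α_mem_EJ J j.2⟩) (fun β hβ h => S.neg_notMem_pos hβ.1 h.1)
    (fun j β hβ hne => ⟨S.sRefl_mem_pos hβ.1 hne, ?_⟩) L hmaps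
  exact S.mapsTo_EJ_of_mem_WJ J (S.sRefl_mem_WJ J j.2) hβ.2

theorem sgnDet_mul_sRefl_of_mem_WJ {w : E ≃ₗ[ℝ] E} (hw : w ∈ S.WJ J) {q : I} (hq : q ∈ J) :
    sgnDet (w * sRefl (S.α q)) = -sgnDet w := by
  obtain ⟨L, rfl⟩ := S.exists_eq_reflWordProd_of_mem_WJ J hw
  have hne : ∀ j : J, S.α j ≠ 0 := fun j => S.α_ne_zero j
  have : reflWordProd (fun j : J => S.α j) L * sRefl (S.α q) =
      reflWordProd (fun j : J => S.α j) (L ++ [⟨q, hq⟩]) := by simp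
  rw [this, sgnDet_reflWordProd _ hne, sgnDet_reflWordProd _ hne, List.length_append,
    List.length_singleton, pow_succ, mul_neg_one]

theorem AltJ_expw_sRefl {q : I} (hq : q ∈ J) (μ : E) :
    S.AltJ J (expw (sRefl (S.α q) μ)) = -S.AltJ J (expw μ) := by
  have := Fintype.ofFinite (S.WJ J)
  rw [AltJ_eq_sum, AltJ_eq_sum, ← Finset.sum_neg_distrib]
  refine Fintype.sum_equiv (Equiv.mulRight ⟨_, S.sRefl_mem_WJ J hq⟩) _ _ fun w => ?_
  simp only [Equiv.coe_mulRight, Subgroup.coe_mul, actGR_expw, LinearEquiv.mul_apply,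
    S.sgnDet_mul_sRefl_of_mem_WJ J w.2 hq, neg_smul, neg_neg]

theorem coeff_AltJ_expw_rhoJ : (S.AltJ J (expw (S.rhoJ J))).coeff (S.rhoJ J) = 1 := by
  have := Fintype.ofFinite (S.WJ J)
  rw [AltJ_eq_sum, AddMonoidAlgebra.coeff_sum, Finset.sum_apply', Finset.sum_eq_single 1]
  · rw [actGR_expw]
    simp [expw, sgnDet]
  · intro w _ hw
    rw [actGR_expw, expw, AddMonoidAlgebra.coeff_smul, AddMonoidAlgebra.coeff_single,
      Finsupp.smul_apply, Finsupp.single_eq_of_ne' fun h =>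
        hw (Subtype.ext (S.eq_one_of_mem_WJ_of_apply_rhoJ J w.2 h)), smul_zero]
  · exact fun h => absurd (Finset.mem_univ _) h

theorem AltJ_expw_rhoJ_ne_zero : S.AltJ J (expw (S.rhoJ J)) ≠ 0 := fun h => by
  simpa [h] using S.coeff_AltJ_expw_rhoJ J

theorem sRefl_add_rhoJ_add_wtJ (c : I → ℝ) (P : ColoredPoset I) (x : P.V) {q : I} (hq : q ∈ J) :
    sRefl (S.α q) ((∑ j ∈ J, c j • S.omegaJ J j) + S.rhoJ J + S.wtJ J P x) =
      (∑ j ∈ J, c j • S.omegaJ J j) + S.rhoJ J + S.wtJ J P x -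
        (1 + c q + (P.mi q x : ℝ)) • S.α q := by
  rw [sRefl_apply, rootReflection, inner_add_left, inner_add_left, S.inner_rhoJ_coroot J hq, wtJ,
    S.inner_sum_omegaJ_coroot J _ hq, S.inner_sum_omegaJ_coroot J _ hq, add_comm (c q) 1]

theorem expw_mul_WGFJ (P : ColoredPoset I) (μ : E) :
    expw μ * S.WGFJ J P = ∑ x, expw (μ + S.wtJ J P x) := by
  simp only [WGFJ, Finset.mul_sum, expw, AddMonoidAlgebra.single_mul_single, mul_one]

end ParabolicWeights

end RootSystemBase

theorem statement13_general {E : Type*} [NormedAddCommGroup E] [InnerProductSpace ℝ E]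
    [FiniteDimensional ℝ E] {I : Type*} [Fintype I] [DecidableEq I]
    (S : RootSystemBase E I) (P : ColoredPoset I)
    (J : Finset I) (νc : I → ℕ)
    (hinv : ∀ w : E ≃ₗ[ℝ] E, w ∈ S.WJ J → actGR w (S.WGFJ J P) = S.WGFJ J P)
    (𝒮 : Finset P.V)
    (τ : P.V → P.V) (hτ : Set.BijOn τ {x : P.V | x ∉ 𝒮} {x : P.V | x ∉ 𝒮})
    (κ : P.V → I) (hκ : ∀ x : P.V, x ∉ 𝒮 → κ x ∈ J)
    (hwt : ∀ x : P.V, x ∉ 𝒮 →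
      S.wtJ J P (τ x) =
        S.wtJ J P x - (1 + (νc (κ x) : ℝ) + (P.mi (κ x) x : ℝ)) • S.α (κ x))
    (Xν : AddMonoidAlgebra ℤ E)
    (hXν : S.IsBialternantJ J (∑ j ∈ J, (νc j : ℝ) • S.omegaJ J j) Xν)
    (Xs : P.V → AddMonoidAlgebra ℤ E)
    (hXs : ∀ s ∈ 𝒮,
      S.IsBialternantJ J ((∑ j ∈ J, (νc j : ℝ) • S.omegaJ J j) + S.wtJ J P s) (Xs s)) :
    Xν * S.WGFJ J P = ∑ s ∈ 𝒮, Xs s := by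
  classical
  set ν := ∑ j ∈ J, (νc j : ℝ) • S.omegaJ J j
  set A : P.V → AddMonoidAlgebra ℤ E := fun x => S.AltJ J (expw (ν + S.rhoJ J + S.wtJ J P x))
  have hcancel : ∑ x ∈ 𝒮ᶜ, A x = 0 := by
    refine Finset.sum_eq_zero_of_bijOn_of_eq_neg (by rwa [Finset.coe_compl]) fun x hx => ?_
    have hxS : x ∉ 𝒮 := Finset.mem_compl.mp hx
    simp only [A]
    rw [hwt x hxS, ← add_sub_assoc, ← S.sRefl_add_rhoJ_add_wtJ J _ P x (hκ x hxS),
      S.AltJ_expw_sRefl J (hκ x hxS)]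
  refine mul_left_cancel₀ (S.AltJ_expw_rhoJ_ne_zero J) ?_
  calc S.AltJ J (expw (S.rhoJ J)) * (Xν * S.WGFJ J P)
      = S.AltJ J (expw (ν + S.rhoJ J) * S.WGFJ J P) := by
        rw [← mul_assoc, hXν.2, S.AltJ_mul_of_invariant J _ _ hinv]
    _ = ∑ x, A x := by rw [S.expw_mul_WGFJ J, S.AltJ_sum J]
    _ = ∑ s ∈ 𝒮, A s := by rw [← Finset.sum_add_sum_compl 𝒮, hcancel, add_zero]
    _ = S.AltJ J (expw (S.rhoJ J)) * ∑ s ∈ 𝒮, Xs s := by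
      rw [Finset.mul_sum]
      refine Finset.sum_congr rfl fun s hs => ?_
      rw [(hXs s hs).2, add_right_comm]

/-- **Splitting Theorem** (Theorem 4.1):  let `R` be a finite ranked poset edge-colored by
`I`, `J ⊆ I`, and `ν = Σ_{j∈J} ν_j ω_j^J` a `Φ_J`-dominant weight.  Suppose `WGF(R)|_J` is
`W_J`-invariant, `𝒮 ⊆ R` with `ν + wt^J(s)` `Φ_J`-dominant for all `s ∈ 𝒮`, and there are
a bijection `τ` of `R∖𝒮` and a vertex-coloring `κ : R∖𝒮 → J` with
`wt^J(τ(x)) = wt^J(x) - (1 + ν_{κ(x)} + m_{κ(x)}(x)) α_{κ(x)}`.  Then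
`χ^{Φ_J}_ν ⬝ WGF(R)|_J = Σ_{s∈𝒮} χ^{Φ_J}_{ν + wt^J(s)}`. -/
theorem statement13 {E : Type*} [NormedAddCommGroup E] [InnerProductSpace ℝ E]
    [FiniteDimensional ℝ E] {I : Type*} [Fintype I] [DecidableEq I]
    (S : RootSystemBase E I) (P : ColoredPoset I)
    (J : Finset I) (νc : I → ℕ)
    (hinv : ∀ w : E ≃ₗ[ℝ] E, w ∈ S.WJ J → actGR w (S.WGFJ J P) = S.WGFJ J P)
    (𝒮 : Finset P.V)
    (hdom : ∀ s ∈ 𝒮,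
      S.IsDominantJ J ((∑ j ∈ J, (νc j : ℝ) • S.omegaJ J j) + S.wtJ J P s))
    (τ : P.V → P.V) (hτ : Set.BijOn τ {x : P.V | x ∉ 𝒮} {x : P.V | x ∉ 𝒮})
    (κ : P.V → I) (hκ : ∀ x : P.V, x ∉ 𝒮 → κ x ∈ J)
    (hwt : ∀ x : P.V, x ∉ 𝒮 →
      S.wtJ J P (τ x) =
        S.wtJ J P x - (1 + (νc (κ x) : ℝ) + (P.mi (κ x) x : ℝ)) • S.α (κ x))
    (Xν : AddMonoidAlgebra ℤ E)
    (hXν : S.IsBialternantJ J (∑ j ∈ J, (νc j : ℝ) • S.omegaJ J j) Xν)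
    (Xs : P.V → AddMonoidAlgebra ℤ E)
    (hXs : ∀ s ∈ 𝒮,
      S.IsBialternantJ J ((∑ j ∈ J, (νc j : ℝ) • S.omegaJ J j) + S.wtJ J P s) (Xs s)) :
    Xν * S.WGFJ J P = ∑ s ∈ 𝒮, Xs s :=
  statement13_general S P J νc hinv 𝒮 τ hτ κ hκ hwt Xν hXν Xs hXs
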